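/- The sufficient acyclicity condition is not necessary: there exist compatible acyclic models M1 and M2 such that the union of their parent graphs contains a directed cycle, yet M1 ⊕' M2 is acyclic. -/

import Mathlib

open scoped Classical

/-- A causal model with focus: exogenous variables `U`, endogenous variables `V`,
range function `R`, structural equations `F` (the value of an endogenous variable
given the values of all other variables), and focus function `G`. -/
structure CModel where
  U : Set ℕ
  V : Set ℕ
  R : ℕ → Set ℕ
  F : ℕ → (ℕ → ℕ) → ℕ
  G : ℕ → Set ℕ

namespace CModel

def vars (M : CModel) : Set ℕ := M.U ∪ M.V

/-- A context: an assignment giving each exogenous variable a value in its range. -/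
def Ctx (M : CModel) (u : ℕ → ℕ) : Prop := ∀ v ∈ M.U, u v ∈ M.R v

/-- `s` solves the equations of `M` in context `u` under the intervention setting
the variables in `X` to the values given by `x`. -/
def solves (M : CModel) (u : ℕ → ℕ) (X : Set ℕ) (x : ℕ → ℕ) (s : ℕ → ℕ) : Prop :=
  (∀ v ∈ X, s v = x v) ∧ (∀ v ∈ M.U, v ∉ X → s v = u v) ∧
  (∀ v ∈ M.V, v ∉ X → s v = M.F v s)

/-- `(M,u) ⊨ [X ← x](C = c)`. -/
def sat (M : CModel) (u : ℕ → ℕ) (X : Set ℕ) (x : ℕ → ℕ) (C c : ℕ) : Prop :=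
  ∃ s, solves M u X x s ∧ s C = c

/-- `B` is a parent of `C`: some change in `B`'s value (holding all others fixed)
changes `C`'s value. -/
def isParent (M : CModel) (B C : ℕ) : Prop :=
  B ≠ C ∧ B ∈ vars M ∧ C ∈ M.V ∧
  ∃ s b1 b2, b1 ∈ M.R B ∧ b2 ∈ M.R B ∧
    M.F C (Function.update s B b1) ≠ M.F C (Function.update s B b2)

def Par (M : CModel) (C : ℕ) : Set ℕ := {B | isParent M B C}

/-- Acyclicity: the parent graph has no directed cycle. -/
def Acyclic (M : CModel) : Prop :=
  ∀ v, ¬ Relation.TransGen (fun a b => isParent M a b) v v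

/-- Well-formedness of a causal model with focus. -/
def WF (M : CModel) : Prop :=
  M.U.Finite ∧ M.V.Finite ∧ M.U.Nonempty ∧ M.V.Nonempty ∧ Disjoint M.U M.V ∧
  (∀ v ∈ vars M, (M.R v).Finite ∧ 1 < (M.R v).ncard) ∧
  (∀ C, C ∉ M.G C) ∧ (∀ C ∈ vars M, M.G C ⊆ vars M) ∧
  (∀ C ∈ M.V, Par M C ⊆ M.G C)

/-- `M1 ⪰_C M2`: `M1` can explain `M2` with respect to `C`. -/
def canExplain (M1 M2 : CModel) (C : ℕ) : Prop :=
  M1.R C = M2.R C ∧ M2.G C ⊆ M1.G C ∧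
  ∀ u2 x c, Ctx M2 u2 → (∀ v ∈ M2.G C, x v ∈ M2.R v) →
    sat M2 u2 (M2.G C) x C c →
    ∃ u1, Ctx M1 u1 ∧ sat M1 u1 (M2.G C) x C c

/-- Compatibility: for every shared variable, one model can explain the other. -/
def compatible (M1 M2 : CModel) : Prop :=
  ∀ C ∈ vars M1 ∩ vars M2, canExplain M1 M2 C ∨ canExplain M2 M1 C

/-- `M1 ≡_C M2`: the two models agree on `C`'s status, range, focus set, and
(if endogenous) structural equation. -/
def equivC (M1 M2 : CModel) (C : ℕ) : Prop :=
  (C ∈ M1.U ∧ C ∈ M2.U ∧ M1.R C = M2.R C ∧ M1.G C = M2.G C) ∨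
  (C ∈ M1.V ∧ C ∈ M2.V ∧ M1.R C = M2.R C ∧ M1.G C = M2.G C ∧
    Par M1 C = Par M2 C ∧ (∀ D ∈ Par M1 C, M1.R D = M2.R D) ∧
    (∀ p c u1 u2, Ctx M1 u1 → Ctx M2 u2 →
      (sat M1 u1 (Par M1 C) p C c ↔ sat M2 u2 (Par M2 C) p C c)))

/-- The combined model takes `C`'s data from `M1` iff `C` appears in `M1` and
either does not appear in `M2` or `M1` dominates on `C`. -/
def take1 (M1 M2 : CModel) (C : ℕ) : Prop :=
  C ∈ vars M1 ∧ (C ∉ vars M2 ∨ canExplain M1 M2 C)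

/-- The combination `M1 ⊕' M2`. -/
noncomputable def combine (M1 M2 : CModel) : CModel where
  U := {C | (take1 M1 M2 C ∧ C ∈ M1.U) ∨ (¬ take1 M1 M2 C ∧ C ∈ M2.U)}
  V := {C | (take1 M1 M2 C ∧ C ∈ M1.V) ∨ (¬ take1 M1 M2 C ∧ C ∈ M2.V)}
  R := fun C => if take1 M1 M2 C then M1.R C else M2.R C
  F := fun C => if take1 M1 M2 C then M1.F C else M2.F C
  G := fun C => if take1 M1 M2 C then M1.G C else M2.G C

/-- Model equality: same variable sets and `≡_C` for every variable. -/
def mequiv (M1 M2 : CModel) : Prop :=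
  M1.U = M2.U ∧ M1.V = M2.V ∧ ∀ C ∈ vars M1, equivC M1 M2 C

/-- Dominance: `M1 ⪰ M2` iff `M1 ⪰_C M2` for every variable `C` of `M2`. -/
def dominates (M1 M2 : CModel) : Prop :=
  ∀ C ∈ vars M2, canExplain M1 M2 C

end CModel

open CModel

/-!
Take three binary variables, `0` exogenous, and two models whose equations merely copy a
value: `chain012` copies `0` into `1` and `1` into `2`, `chain021` copies `0` into `2` and `2`
into `1`. The union of their parent graphs contains the cycle `1 → 2 → 1`. But `chain021`
focuses only on the parent of each variable, and every such query is answered in `chain012`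
by the constant solution in which all variables carry the queried value. So `chain012`
dominates `chain021`, the combination keeps only the equations of `chain012`, and it is
acyclic.
-/

namespace CModel

variable {M M1 M2 : CModel}

theorem acyclic_of_rank (f : ℕ → ℕ) (hf : ∀ a b, isParent M a b → f a < f b) : Acyclic M := by
  intro v hv
  have hlt := Relation.TransGen.lift f hf v v hv
  rw [Relation.transGen_eq_self] at hlt
  exact lt_irrefl _ hlt

section Dominance

theorem compatible_of_dominates (hd : dominates M1 M2) : compatible M1 M2 :=
  fun C hC => Or.inl (hd C hC.2)

theorem take1_iff_of_dominates (hd : dominates M1 M2) {C : ℕ} :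
    take1 M1 M2 C ↔ C ∈ vars M1 := by
  refine ⟨And.left, fun hC => ⟨hC, ?_⟩⟩
  by_cases h2 : C ∈ vars M2
  exacts [Or.inr (hd C h2), Or.inl h2]

theorem mem_vars_of_mem_vars_combine (hsub : vars M2 ⊆ vars M1) {C : ℕ}
    (hC : C ∈ vars (combine M1 M2)) : C ∈ vars M1 := by
  rcases hC with (⟨ht, -⟩ | ⟨-, h2⟩) | (⟨ht, -⟩ | ⟨-, h2⟩)
  exacts [ht.1, hsub (Or.inl h2), ht.1, hsub (Or.inr h2)]

theorem isParent_of_isParent_combine (hd : dominates M1 M2) (hsub : vars M2 ⊆ vars M1)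
    {B C : ℕ} (h : isParent (combine M1 M2) B C) : isParent M1 B C := by
  obtain ⟨hBC, hB, hC, s, b1, b2, hb1, hb2, hF⟩ := h
  have hB1 : B ∈ vars M1 := mem_vars_of_mem_vars_combine hsub hB
  have htB : take1 M1 M2 B := (take1_iff_of_dominates hd).2 hB1
  have htC : take1 M1 M2 C :=
    (take1_iff_of_dominates hd).2 (mem_vars_of_mem_vars_combine hsub (Or.inr hC))
  have hC1 : C ∈ M1.V := by
    rcases hC with ⟨-, h⟩ | ⟨h, -⟩
    exacts [h, absurd htC h]
  simp only [combine, if_pos htB, if_pos htC] at hb1 hb2 hF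
  exact ⟨hBC, hB1, hC1, s, b1, b2, hb1, hb2, hF⟩

theorem Acyclic.combine_of_dominates (h1 : Acyclic M1) (hd : dominates M1 M2)
    (hsub : vars M2 ⊆ vars M1) : Acyclic (combine M1 M2) :=
  fun v hv =>
    h1 v (Relation.TransGen.mono (fun _ _ => isParent_of_isParent_combine hd hsub) v v hv)

end Dominance

section CopyModel

def copyModel (pa : ℕ → ℕ) (G : ℕ → Set ℕ) : CModel where
  U := {0}
  V := {1, 2}
  R := fun _ => {0, 1}
  F := fun C s => s (pa C)
  G := G

variable {pa : ℕ → ℕ} {G : ℕ → Set ℕ}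

theorem isParent_copyModel_iff {B C : ℕ} :
    isParent (copyModel pa G) B C ↔
      B ≠ C ∧ B ∈ ({0, 1, 2} : Set ℕ) ∧ C ∈ ({1, 2} : Set ℕ) ∧ B = pa C := by
  constructor
  · rintro ⟨hBC, hB, hC, s, b1, b2, -, -, hF⟩
    refine ⟨hBC, hB, hC, ?_⟩
    by_contra hne
    exact hF (by simp [copyModel, Function.update_of_ne (Ne.symm hne)])
  · rintro ⟨hBC, hB, hC, rfl⟩
    exact ⟨hBC, hB, hC, fun _ => 0, 0, 1, by simp [copyModel], by simp [copyModel],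
      by simp [copyModel]⟩

theorem wf_copyModel (hG : ∀ C, C ∉ G C) (hGvars : ∀ C, G C ⊆ {0, 1, 2})
    (hpa : ∀ C ∈ ({1, 2} : Set ℕ), pa C ∈ G C) : WF (copyModel pa G) := by
  refine ⟨Set.finite_singleton 0, (Set.finite_singleton 2).insert 1, ⟨0, rfl⟩,
    ⟨1, by simp [copyModel]⟩, ?_, fun _ _ => ⟨(Set.finite_singleton 1).insert 0, ?_⟩, hG,
    fun C _ => hGvars C, ?_⟩
  · simp [copyModel]
  · simp [copyModel]
  · rintro C - B hB
    obtain ⟨-, -, hC, rfl⟩ := isParent_copyModel_iff.1 hB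
    exact hpa C hC

theorem sat_copyModel_const {X : Set ℕ} {x : ℕ → ℕ} {c : ℕ} (hx : ∀ v ∈ X, x v = c) (C : ℕ) :
    sat (copyModel pa G) (fun _ => c) X x C c :=
  ⟨fun _ => c, ⟨fun v hv => (hx v hv).symm, fun _ _ _ => rfl, fun _ _ _ => rfl⟩, rfl⟩

theorem canExplain_copyModel {M2 : CModel} {C : ℕ} (hR : M2.R C = {0, 1}) (hG : M2.G C ⊆ G C)
    (h : ∀ u2 x c, Ctx M2 u2 → (∀ v ∈ M2.G C, x v ∈ M2.R v) → sat M2 u2 (M2.G C) x C c →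
      c ∈ ({0, 1} : Set ℕ) ∧ ∀ v ∈ M2.G C, x v = c) :
    canExplain (copyModel pa G) M2 C := by
  refine ⟨hR.symm, hG, fun u2 x c hu hx hs => ?_⟩
  obtain ⟨hc, hxc⟩ := h u2 x c hu hx hs
  exact ⟨fun _ => c, fun _ _ => hc, sat_copyModel_const hxc C⟩

theorem sat_copyModel_zero {u : ℕ → ℕ} {X : Set ℕ} {x : ℕ → ℕ} {c : ℕ} (h0 : 0 ∉ X)
    (hs : sat (copyModel pa G) u X x 0 c) : c = u 0 := by
  obtain ⟨s, ⟨-, hU, -⟩, rfl⟩ := hs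
  exact hU 0 rfl h0

theorem sat_copyModel_of_mem {u : ℕ → ℕ} {X : Set ℕ} {x : ℕ → ℕ} {C c : ℕ}
    (hC : C ∈ ({1, 2} : Set ℕ)) (hCX : C ∉ X) (hpaX : pa C ∈ X)
    (hs : sat (copyModel pa G) u X x C c) : c = x (pa C) := by
  obtain ⟨s, ⟨hX, -, hV⟩, rfl⟩ := hs
  exact (hV C hC hCX).trans (hX _ hpaX)

theorem canExplain_copyModel_zero {pa' : ℕ → ℕ} {G' : ℕ → Set ℕ} (hG' : G' 0 = ∅) :
    canExplain (copyModel pa G) (copyModel pa' G') 0 :=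
  canExplain_copyModel rfl (by simp [copyModel, hG']) fun u2 _ _ hu _ hs =>
    ⟨sat_copyModel_zero (by simp [copyModel, hG']) hs ▸ hu 0 rfl, by simp [copyModel, hG']⟩

theorem canExplain_copyModel_of_focus_eq_singleton {pa' : ℕ → ℕ} {G' : ℕ → Set ℕ} {C : ℕ}
    (hC : C ∈ ({1, 2} : Set ℕ)) (hG' : G' C = {pa' C}) (hpa' : pa' C ≠ C) (hG : pa' C ∈ G C) :
    canExplain (copyModel pa G) (copyModel pa' G') C := by
  have hpaX : pa' C ∈ G' C := hG' ▸ rfl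
  refine canExplain_copyModel rfl (by simpa [copyModel, hG'] using hG) fun u2 x c _ hx hs => ?_
  have hc : c = x (pa' C) := sat_copyModel_of_mem hC (hG' ▸ hpa'.symm) hpaX hs
  refine ⟨hc ▸ hx _ hpaX, fun v (hv : v ∈ G' C) => ?_⟩
  rw [hG', Set.mem_singleton_iff] at hv
  rw [hv, hc]

end CopyModel

def chain012 : CModel := copyModel (fun C => C - 1) (fun C => {0, 1, 2} \ {C})

def chain021 : CModel :=
  copyModel (fun C => if C = 1 then 2 else 0)
    (fun C => if C = 1 then {2} else if C = 2 then {0} else ∅)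

theorem wf_chain012 : WF chain012 :=
  wf_copyModel (by simp) (fun _ => Set.sdiff_subset) (by simp)

theorem wf_chain021 : WF chain021 :=
  wf_copyModel (by intro C; split_ifs <;> simp_all) (by intro C; split_ifs <;> simp)
    (by simp)

theorem acyclic_chain012 : Acyclic chain012 :=
  acyclic_of_rank id fun a b hab => by
    obtain ⟨-, -, hb, rfl⟩ := isParent_copyModel_iff.1 hab
    rcases hb with rfl | rfl <;> decide

theorem acyclic_chain021 : Acyclic chain021 :=
  acyclic_of_rank (fun C => if C = 1 then 2 else if C = 2 then 1 else 0) fun a b hab => by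
    obtain ⟨-, -, hb, rfl⟩ := isParent_copyModel_iff.1 hab
    rcases hb with rfl | rfl <;> decide

theorem dominates_chain012_chain021 : dominates chain012 chain021 := by
  rintro C (rfl | rfl | rfl)
  · exact canExplain_copyModel_zero rfl
  · exact canExplain_copyModel_of_focus_eq_singleton (by simp) rfl (by decide) (by simp)
  · exact canExplain_copyModel_of_focus_eq_singleton (by simp) rfl (by decide) (by simp)

end CModel

/-- the union-graph acyclicity condition is not necessary. -/
theorem union_acyclicity_not_necessary : ∃ (M1 M2 : CModel),
    WF M1 ∧ WF M2 ∧ Acyclic M1 ∧ Acyclic M2 ∧ compatible M1 M2 ∧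
    (∃ v, Relation.TransGen (fun a b => isParent M1 a b ∨ isParent M2 a b) v v) ∧
    Acyclic (combine M1 M2) := by
  have h12 : isParent chain012 1 2 := isParent_copyModel_iff.2 ⟨by decide, by simp, by simp, rfl⟩
  have h21 : isParent chain021 2 1 := isParent_copyModel_iff.2 ⟨by decide, by simp, by simp, rfl⟩
  refine ⟨chain012, chain021, wf_chain012, wf_chain021, acyclic_chain012, acyclic_chain021,
    compatible_of_dominates dominates_chain012_chain021,
    ⟨1, .head (Or.inl h12) (.single (Or.inr h21))⟩,
    acyclic_chain012.combine_of_dominates dominates_chain012_chain021 subset_rfl⟩
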